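/- arXiv:2406.18824 — 3 statements merged into one kernel-verified Lean document; each statement's English description precedes it below -/
import Mathlib

section
/- For any 2×2 complex matrix A, the numerical range W(A) is a convex subset of ℂ (Toeplitz–Hausdorff theorem in dimension 2). -/
open Matrix

/-- The numerical range of a complex `n × n` matrix. -/
def numRange {n : ℕ} (A : Matrix (Fin n) (Fin n) ℂ) : Set ℂ :=
  {z | ∃ x : Fin n → ℂ, star x ⬝ᵥ x = 1 ∧ star x ⬝ᵥ A.mulVec x = z}

namespace NRaux

variable {n : ℕ}

noncomputable def qf (A : Matrix (Fin n) (Fin n) ℂ) (x y : Fin n → ℂ) : ℂ :=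
  star x ⬝ᵥ A.mulVec y

lemma qf_expand (B : Matrix (Fin n) (Fin n) ℂ) (x y : Fin n → ℂ) (a b : ℂ) :
    qf B (a•x + b•y) (a•x + b•y) =
      (starRingEnd ℂ) a * a * qf B x x + (starRingEnd ℂ) a * b * qf B x y
      + (starRingEnd ℂ) b * a * qf B y x + (starRingEnd ℂ) b * b * qf B y y := by
  simp [qf, star_add, star_smul, add_dotProduct, dotProduct_add, Matrix.mulVec_add,
    Matrix.mulVec_smul, smul_dotProduct, dotProduct_smul, smul_eq_mul, Complex.star_def]
  ring

lemma qf_smul (B : Matrix (Fin n) (Fin n) ℂ) (x y : Fin n → ℂ) (a b : ℂ) :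
    qf B (a•x) (b•y) = (starRingEnd ℂ) a * b * qf B x y := by
  simp [qf, star_smul, smul_dotProduct, Matrix.mulVec_smul, dotProduct_smul, smul_eq_mul,
    Complex.star_def]
  ring

lemma qf_one (u v : Fin n → ℂ) : qf 1 u v = star u ⬝ᵥ v := by simp [qf]

lemma qf_one_conj (x y : Fin n → ℂ) : (starRingEnd ℂ) (qf 1 x y) = qf 1 y x := by
  simp [qf, dotProduct, map_sum, Complex.star_def, mul_comm]

lemma qf_one_self (u : Fin n → ℂ) :
    qf 1 u u = ((∑ i, Complex.normSq (u i) : ℝ) : ℂ) := by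
  simp [qf, dotProduct, Complex.star_def, ← Complex.normSq_eq_conj_mul_self]

lemma key (B : Matrix (Fin n) (Fin n) ℂ) (x y : Fin n → ℂ)
    (hx : qf 1 x x = 1) (hy : qf 1 y y = 1)
    (hqx : qf B x x = 0) (hqy : qf B y y = 1)
    {t : ℝ} (ht : t ∈ Set.Icc (0:ℝ) 1) :
    ∃ u : Fin n → ℂ, star u ⬝ᵥ u = 1 ∧ qf B u u = (t : ℂ) := by
  classical
  set m := qf B x y - (starRingEnd ℂ) (qf B y x) with hm
  set θ : ℂ := if m = 0 then 1 else ((‖m‖ : ℝ) : ℂ)⁻¹ * m with hθdef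
  have h2 : (starRingEnd ℂ) m * m = ((‖m‖ : ℝ) : ℂ)^2 := by
    rw [mul_comm, Complex.mul_conj, ← Complex.sq_norm]; push_cast; ring
  have hθ : (starRingEnd ℂ) θ * θ = 1 := by
    by_cases h : m = 0
    · simp [hθdef, h]
    · have hc : ((‖m‖ : ℝ) : ℂ) ≠ 0 := by
        simpa [Complex.ofReal_eq_zero] using (norm_ne_zero_iff.mpr h)
      rw [hθdef, if_neg h]
      rw [_root_.map_mul, map_inv₀, Complex.conj_ofReal,
        show ∀ a b c : ℂ, a * b * (a * c) = a^2 * (b*c) from fun a b c => by ring, h2,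
        ← mul_pow, inv_mul_cancel₀ hc, one_pow]
  have hθm : ((starRingEnd ℂ) θ * m).im = 0 := by
    by_cases h : m = 0
    · simp [h]
    · rw [hθdef, if_neg h, _root_.map_mul, map_inv₀, Complex.conj_ofReal, mul_assoc, h2]
      simp [← Complex.ofReal_pow]
  -- the phase-rotated vector
  set x' := θ • x with hx'def
  have hx' : qf 1 x' x' = 1 := by rw [hx'def, qf_smul, hx, mul_one, hθ]
  have hqx' : qf B x' x' = 0 := by rw [hx'def, qf_smul, hqx, mul_zero]
  set p := qf B x' y with hp
  set r := qf B y x' with hr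
  set d := p + r with hd
  have hpθ : p = (starRingEnd ℂ) θ * qf B x y := by
    rw [hp, hx'def, show (y : Fin n → ℂ) = (1:ℂ) • y from (one_smul ℂ y).symm, qf_smul]
    simp
  have hrθ : r = θ * qf B y x := by
    rw [hr, hx'def, show (y : Fin n → ℂ) = (1:ℂ) • y from (one_smul ℂ y).symm]
    rw [qf_smul]
    simp
  have hdim : d.im = 0 := by
    have hsplit : d = (starRingEnd ℂ) θ * m
        + (θ * qf B y x + (starRingEnd ℂ) (θ * qf B y x)) := by
      rw [hd, hpθ, hrθ, hm, _root_.map_mul]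
      ring
    rw [hsplit, Complex.add_conj]
    simp [hθm]
  set e := qf 1 x' y with he
  have he' : qf 1 y x' = (starRingEnd ℂ) e := by rw [he, qf_one_conj]
  -- the path and its normalizations
  set z : ℝ → (Fin n → ℂ) := fun s => (((1-s : ℝ)) : ℂ) • x' + ((s : ℝ) : ℂ) • y with hzdef
  set N : ℝ → ℝ := fun s => (1-s)^2 + 2*s*(1-s)*e.re + s^2 with hNdef
  have hz1 : ∀ s : ℝ, qf 1 (z s) (z s) = ((N s : ℝ) : ℂ) := by
    intro s
    have hee : e + (starRingEnd ℂ) e = 2*((e.re : ℝ) : ℂ) := by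
      rw [Complex.add_conj]; push_cast; ring
    rw [hzdef, qf_expand, hx', hy, ← he, he']
    simp only [Complex.conj_ofReal, hNdef]
    push_cast
    linear_combination ((s:ℂ)*(1-(s:ℂ))) * hee
  have hzB : ∀ s : ℝ, qf B (z s) (z s) = (s:ℂ)^2 + (s:ℂ)*(1-(s:ℂ))*d := by
    intro s
    rw [hzdef, qf_expand, hqx', hqy, ← hp, ← hr]
    simp only [Complex.conj_ofReal, hd]
    push_cast
    ring
  have hzne : ∀ s ∈ Set.Icc (0:ℝ) 1, z s ≠ 0 := by
    intro s _ h0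
    by_cases hs : s = 0
    · have : x' = 0 := by
        have := h0
        rw [hzdef] at this
        simpa [hs] using this
      rw [this] at hx'
      simp [qf, dotProduct] at hx'
    · have hsne : (s : ℂ) ≠ 0 := by exact_mod_cast hs
      have hyx : y = ((s:ℂ)⁻¹ * -(((1-s:ℝ)) : ℂ)) • x' := by
        have h1 : ((s:ℝ) : ℂ) • y = -((((1-s:ℝ)) : ℂ) • x') := by
          have := h0
          rw [hzdef] at this
          simp only at this
          funext i
          have := congrFun this i
          simp only [Pi.add_apply, Pi.smul_apply, Pi.zero_apply, smul_eq_mul] at this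
          simp only [Pi.neg_apply, Pi.smul_apply, smul_eq_mul]
          linear_combination this
        rw [mul_smul, neg_smul, ← h1, ← mul_smul,
          inv_mul_cancel₀ hsne, one_smul]
      rw [hyx, qf_smul, hqx', mul_zero] at hqy
      exact one_ne_zero hqy.symm
  have hNpos : ∀ s ∈ Set.Icc (0:ℝ) 1, 0 < N s := by
    intro s hs
    have hsum : ((N s : ℝ) : ℂ) = ((∑ i, Complex.normSq (z s i) : ℝ) : ℂ) := by
      rw [← hz1, qf_one_self]
    have hsum' : N s = ∑ i, Complex.normSq (z s i) := by exact_mod_cast hsum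
    rw [hsum']
    have hge : 0 ≤ ∑ i, Complex.normSq (z s i) :=
      Finset.sum_nonneg fun i _ => Complex.normSq_nonneg _
    have hne : (∑ i, Complex.normSq (z s i)) ≠ 0 := by
      intro h
      apply hzne s hs
      funext i
      have := (Finset.sum_eq_zero_iff_of_nonneg
        (fun i _ => Complex.normSq_nonneg (z s i))).mp h i (Finset.mem_univ i)
      simpa [Complex.normSq_eq_zero] using this
    exact lt_of_le_of_ne hge (Ne.symm hne)
  -- the real path function and IVT
  set f : ℝ → ℝ := fun s => (s^2 + s*(1-s)*d.re) / N s with hfdef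
  have hcont : ContinuousOn f (Set.Icc (0:ℝ) 1) := by
    apply ContinuousOn.div
    · fun_prop
    · fun_prop
    · intro s hs; exact (hNpos s hs).ne'
  have hf0 : f 0 = 0 := by simp [hfdef, hNdef]
  have hf1 : f 1 = 1 := by simp [hfdef, hNdef]
  have hIVT := intermediate_value_Icc (zero_le_one) hcont
  rw [hf0, hf1] at hIVT
  obtain ⟨s, hs, hfs⟩ := hIVT ht
  -- normalize z s
  have hNs := hNpos s hs
  set c : ℝ := (Real.sqrt (N s))⁻¹ with hcdef
  have hcc : (c : ℂ) * (c : ℂ) * ((N s : ℝ) : ℂ) = 1 := by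
    have : c * c * N s = 1 := by
      rw [hcdef, ← mul_inv]
      rw [Real.mul_self_sqrt hNs.le]
      exact inv_mul_cancel₀ hNs.ne'
    exact_mod_cast this
  refine ⟨(c : ℂ) • z s, ?_, ?_⟩
  · have : qf 1 ((c:ℂ) • z s) ((c:ℂ) • z s) = 1 := by
      rw [qf_smul, Complex.conj_ofReal, hz1, hcc]
    rw [qf_one] at this
    exact this
  · rw [qf_smul, Complex.conj_ofReal, hzB]
    have hdre : d = ((d.re : ℝ) : ℂ) := by
      rw [← Complex.re_add_im d, hdim]
      simp
    have hNinv : (c:ℂ) * (c:ℂ) = (((N s)⁻¹ : ℝ) : ℂ) := by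
      have : c * c = (N s)⁻¹ := by
        rw [hcdef, ← mul_inv, Real.mul_self_sqrt hNs.le]
      exact_mod_cast this
    rw [hdre, hNinv]
    rw [← hfs, hfdef]
    push_cast
    field_simp

lemma qf_affine (A : Matrix (Fin n) (Fin n) ℂ) (c z : ℂ) (u : Fin n → ℂ) :
    qf (c • (A - z • (1 : Matrix (Fin n) (Fin n) ℂ))) u u
      = c * (qf A u u - z * qf 1 u u) := by
  simp [qf, Matrix.smul_mulVec, Matrix.sub_mulVec, Matrix.one_mulVec,
    dotProduct_smul, dotProduct_sub, smul_eq_mul]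

end NRaux

open NRaux in
/-- Toeplitz–Hausdorff in dimension 2: the numerical range of any
`2 × 2` complex matrix is convex. -/
theorem numRange_convex_two (A : Matrix (Fin 2) (Fin 2) ℂ) :
    Convex ℝ (numRange A) := by
  intro z₀ hz₀ z₁ hz₁ a b ha hb hab
  obtain ⟨x, hx, hAx⟩ := hz₀
  obtain ⟨y, hy, hAy⟩ := hz₁
  by_cases h : z₁ = z₀
  · subst h
    have : a • z₁ + b • z₁ = z₁ := by
      rw [← add_smul, hab, one_smul]
    rw [this]
    exact ⟨x, hx, hAx⟩
  · have hc : z₁ - z₀ ≠ 0 := sub_ne_zero.mpr h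
    set c : ℂ := z₁ - z₀ with hcdef
    set B : Matrix (Fin 2) (Fin 2) ℂ := c⁻¹ • (A - z₀ • (1 : Matrix (Fin 2) (Fin 2) ℂ))
      with hBdef
    have hx1 : qf 1 x x = 1 := by rw [qf_one]; exact hx
    have hy1 : qf 1 y y = 1 := by rw [qf_one]; exact hy
    have hAx' : qf A x x = z₀ := hAx
    have hAy' : qf A y y = z₁ := hAy
    have hBx : qf B x x = 0 := by
      rw [hBdef, qf_affine, hAx', hx1, mul_one, sub_self, mul_zero]
    have hBy : qf B y y = 1 := by
      rw [hBdef, qf_affine, hAy', hy1, mul_one, ← hcdef, inv_mul_cancel₀ hc]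
    have hbmem : b ∈ Set.Icc (0:ℝ) 1 := ⟨hb, by linarith⟩
    obtain ⟨u, hu, hq⟩ := key B x y hx1 hy1 hBx hBy hbmem
    refine ⟨u, hu, ?_⟩
    have hu1 : qf 1 u u = 1 := by rw [qf_one]; exact hu
    rw [hBdef, qf_affine, hu1, mul_one] at hq
    have hq2 : qf A u u - z₀ = (b : ℂ) * c := by
      rw [inv_mul_eq_div, div_eq_iff hc] at hq
      linear_combination hq
    have habC : (a : ℂ) + (b : ℂ) = 1 := by exact_mod_cast hab
    show star u ⬝ᵥ A.mulVec u = a • z₀ + b • z₁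
    have : (qf A u u : ℂ) = a • z₀ + b • z₁ := by
      rw [Complex.real_smul, Complex.real_smul]
      rw [hcdef] at hq2
      linear_combination hq2 - z₀ * habC
    exact this
end

section
/- Let λ₁, λ₂ : [0,1] → ℂ \ {0} be continuous loops (λⱼ(0) = λⱼ(1)) with different winding numbers about the origin. Then there exists τ₀ ∈ [0,1] such that 0 lies on the closed line segment joining λ₁(τ₀) and λ₂(τ₀). -/
open Set

lemma winding_int (γ : ℝ → ℂ) (φ : ℝ → ℝ) (hl : γ 0 = γ 1)
    (hne : ∀ τ ∈ Icc (0:ℝ) 1, γ τ ≠ 0)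
    (harg : ∀ τ ∈ Icc (0:ℝ) 1,
      γ τ = (‖γ τ‖ : ℂ) * Complex.exp (2 * Real.pi * Complex.I * (φ τ))) :
    ∃ n : ℤ, φ 1 - φ 0 = n := by
  have h0 := harg 0 (by norm_num)
  have h1 := harg 1 (by norm_num)
  have habs : ‖γ 0‖ = ‖γ 1‖ := by rw [hl]
  have hane : ((‖γ 0‖ : ℝ) : ℂ) ≠ 0 := by
    simpa using norm_ne_zero_iff.mpr (hne 0 (by norm_num))
  have hE : Complex.exp (2 * Real.pi * Complex.I * (φ 0))
      = Complex.exp (2 * Real.pi * Complex.I * (φ 1)) := by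
    have h := hl
    rw [h0, h1, ← habs] at h
    exact mul_left_cancel₀ hane h
  have hE1 : Complex.exp (2 * Real.pi * Complex.I * (φ 1) - 2 * Real.pi * Complex.I * (φ 0)) = 1 := by
    rw [Complex.exp_sub, ← hE, div_self (Complex.exp_ne_zero _)]
  rw [Complex.exp_eq_one_iff] at hE1
  obtain ⟨n, hn⟩ := hE1
  refine ⟨n, ?_⟩
  have h2 : ((φ 1 : ℂ) - φ 0) * (2 * Real.pi * Complex.I) = (n : ℂ) * (2 * Real.pi * Complex.I) := by
    linear_combination hn
  have hne2 : (2 * (Real.pi : ℂ) * Complex.I) ≠ 0 := by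
    simp [Real.pi_ne_zero, Complex.I_ne_zero]
  have h3 := mul_right_cancel₀ hne2 h2
  exact_mod_cast h3

/-- two continuous nonvanishing loops in `ℂ \ {0}` with different
winding numbers about the origin (witnessed by continuous argument functions
`φ₁, φ₂`, where `γⱼ(τ) = |γⱼ(τ)| e^{2πi φⱼ(τ)}`) must, at some time `τ₀`, have
the origin on the segment joining them. -/
theorem segment_hits_zero_of_different_winding
    (γ₁ γ₂ : ℝ → ℂ) (φ₁ φ₂ : ℝ → ℝ)
    (hc₁ : ContinuousOn γ₁ (Icc 0 1)) (hc₂ : ContinuousOn γ₂ (Icc 0 1))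
    (hne₁ : ∀ τ ∈ Icc (0:ℝ) 1, γ₁ τ ≠ 0) (hne₂ : ∀ τ ∈ Icc (0:ℝ) 1, γ₂ τ ≠ 0)
    (hloop₁ : γ₁ 0 = γ₁ 1) (hloop₂ : γ₂ 0 = γ₂ 1)
    (hφc₁ : ContinuousOn φ₁ (Icc 0 1)) (hφc₂ : ContinuousOn φ₂ (Icc 0 1))
    (harg₁ : ∀ τ ∈ Icc (0:ℝ) 1,
      γ₁ τ = (‖γ₁ τ‖ : ℂ) * Complex.exp (2 * Real.pi * Complex.I * (φ₁ τ)))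
    (harg₂ : ∀ τ ∈ Icc (0:ℝ) 1,
      γ₂ τ = (‖γ₂ τ‖ : ℂ) * Complex.exp (2 * Real.pi * Complex.I * (φ₂ τ)))
    (hwind : φ₁ 1 - φ₁ 0 ≠ φ₂ 1 - φ₂ 0) :
    ∃ τ₀ ∈ Icc (0:ℝ) 1, (0 : ℂ) ∈ segment ℝ (γ₁ τ₀) (γ₂ τ₀) := by
  by_contra hcon
  push_neg at hcon
  set ψ : ℝ → ℝ := fun τ => φ₁ τ - φ₂ τ with hψdef
  have hψc : ContinuousOn ψ (Icc 0 1) := hφc₁.sub hφc₂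
  obtain ⟨n₁, hn₁⟩ := winding_int γ₁ φ₁ hloop₁ hne₁ harg₁
  obtain ⟨n₂, hn₂⟩ := winding_int γ₂ φ₂ hloop₂ hne₂ harg₂
  have hδ : ψ 1 - ψ 0 = ((n₁ - n₂ : ℤ) : ℝ) := by
    simp only [hψdef]; push_cast; linarith
  have hδne : n₁ - n₂ ≠ 0 := by
    intro h0
    apply hwind
    have h1 : n₁ = n₂ := sub_eq_zero.mp h0
    have : (n₁ : ℝ) = n₂ := by exact_mod_cast h1
    rw [hn₁, hn₂]; rw [this]
  -- ψ never takes half-integer values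
  have hhalf : ∀ τ ∈ Icc (0:ℝ) 1, ∀ m : ℤ, ψ τ ≠ m + 1/2 := by
    intro τ hτ m hm
    apply hcon τ hτ
    have hr : φ₁ τ = φ₂ τ + m + 1/2 := by
      have : φ₁ τ - φ₂ τ = m + 1/2 := hm
      linarith
    have hφτ : (φ₁ τ : ℂ) = (φ₂ τ : ℂ) + m + 1/2 := by
      rw [show ((φ₂ τ : ℂ) + m + 1/2) = ((φ₂ τ + m + 1/2 : ℝ) : ℂ) by push_cast; ring]
      exact_mod_cast congrArg (fun x : ℝ => (x : ℂ)) hr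
    have hE : Complex.exp (2 * Real.pi * Complex.I * (φ₁ τ))
        = - Complex.exp (2 * Real.pi * Complex.I * (φ₂ τ)) := by
      rw [hφτ, show 2 * (Real.pi:ℂ) * Complex.I * ((φ₂ τ:ℂ) + m + 1/2)
        = 2 * Real.pi * Complex.I * (φ₂ τ) + (m:ℂ) * (2 * Real.pi * Complex.I)
          + Real.pi * Complex.I by ring]
      rw [Complex.exp_add, Complex.exp_add, Complex.exp_int_mul_two_pi_mul_I,
        Complex.exp_pi_mul_I]
      ring
    set r₁ := ‖γ₁ τ‖ with hr₁def
    set r₂ := ‖γ₂ τ‖ with hr₂def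
    have hr₁ : 0 < r₁ := norm_pos_iff.mpr (hne₁ τ hτ)
    have hr₂ : 0 < r₂ := norm_pos_iff.mpr (hne₂ τ hτ)
    have hsum : r₁ + r₂ ≠ 0 := by positivity
    refine ⟨r₂ / (r₁ + r₂), r₁ / (r₁ + r₂), by positivity, by positivity,
      by field_simp; ring, ?_⟩
    rw [harg₁ τ hτ, harg₂ τ hτ, hE, Complex.real_smul, Complex.real_smul]
    push_cast
    have hsumC : ((r₁ : ℂ) + r₂) ≠ 0 := by exact_mod_cast hsum
    field_simp
    ring
  -- intermediate value argument
  rcases lt_or_gt_of_ne (fun h : ψ 0 = ψ 1 => hδne (by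
      have : ((n₁ - n₂ : ℤ) : ℝ) = 0 := by rw [← hδ, h]; ring
      exact_mod_cast this)) with hlt | hgt
  · set m := ⌊ψ 0 + 1/2⌋ with hmdef
    have h1 : ψ 0 < (m : ℝ) + 1/2 := by
      have := Int.lt_floor_add_one (ψ 0 + 1/2)
      linarith
    have h2 : (m : ℝ) + 1/2 ≤ ψ 0 + 1 := by
      have := Int.floor_le (ψ 0 + 1/2)
      linarith
    have hge1 : ψ 0 + 1 ≤ ψ 1 := by
      have : (1 : ℝ) ≤ ((n₁ - n₂ : ℤ) : ℝ) := by
        have : (1 : ℤ) ≤ n₁ - n₂ := by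
          rcases lt_or_ge (n₁ - n₂) 1 with h | h
          · exfalso
            have hle : n₁ - n₂ ≤ 0 := by omega
            have : ((n₁ - n₂ : ℤ) : ℝ) ≤ 0 := by exact_mod_cast hle
            linarith [hδ ▸ this, hlt]
          · exact h
        exact_mod_cast this
      linarith [hδ]
    have hmem : (m : ℝ) + 1/2 ∈ Icc (ψ 0) (ψ 1) := ⟨le_of_lt h1, h2.trans hge1⟩
    have := intermediate_value_Icc (by norm_num : (0:ℝ) ≤ 1) hψc hmem
    obtain ⟨τ, hτ, hτv⟩ := this
    exact hhalf τ hτ m hτv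
  · set m := ⌊ψ 1 + 1/2⌋ with hmdef
    have h1 : ψ 1 < (m : ℝ) + 1/2 := by
      have := Int.lt_floor_add_one (ψ 1 + 1/2)
      linarith
    have h2 : (m : ℝ) + 1/2 ≤ ψ 1 + 1 := by
      have := Int.floor_le (ψ 1 + 1/2)
      linarith
    have hge1 : ψ 1 + 1 ≤ ψ 0 := by
      have : ((n₁ - n₂ : ℤ) : ℝ) ≤ -1 := by
        have : n₁ - n₂ ≤ -1 := by
          rcases lt_or_ge (-1 : ℤ) (n₁ - n₂) with h | h
          · exfalso
            have hge : 0 ≤ n₁ - n₂ := by omega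
            have : (0:ℝ) ≤ ((n₁ - n₂ : ℤ) : ℝ) := by exact_mod_cast hge
            linarith [hδ ▸ this, hgt]
          · exact h
        exact_mod_cast this
      linarith [hδ]
    have hmem : (m : ℝ) + 1/2 ∈ Icc (ψ 1) (ψ 0) := ⟨le_of_lt h1, h2.trans hge1⟩
    have := intermediate_value_Icc' (by norm_num : (0:ℝ) ≤ 1) hψc hmem
    obtain ⟨τ, hτ, hτv⟩ := this
    exact hhalf τ hτ m hτv
end

section
/- Let S(ω) = C + d κᵀ/(−i(ω − ω₀) + γ) with C invertible, γ > 0, and ρ = −κᵀ C⁻¹ d/(2γ). If Re ρ > 1/2 then det S(ω) = 0 has no real solution ω, and the winding of det S(ω) about the origin as ω runs over (−∞, ∞) (with endpoints both tending to det C) equals 1; if Re ρ < 1/2 the winding equals 0. -/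
open Matrix Filter Topology

lemma polar_of_pos (x y : ℝ) (hx : 0 < x) :
    (x:ℂ) + y*Complex.I = (‖(x:ℂ)+y*Complex.I‖ : ℂ) *
      Complex.exp (Real.arctan (y/x) * Complex.I) := by
  have hs : Real.sqrt (1 + (y/x)^2) > 0 := Real.sqrt_pos.2 (by positivity)
  have habs : ‖(x:ℂ)+y*Complex.I‖ = x * Real.sqrt (1 + (y/x)^2) := by
    rw [Complex.norm_def, Complex.normSq_add_mul_I]
    rw [← Real.sqrt_sq hx.le, ← Real.sqrt_mul (by positivity)]
    congr 1
    field_simp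
    exact Real.sq_sqrt (by positivity)
  rw [habs, Complex.exp_mul_I, ← Complex.ofReal_cos, ← Complex.ofReal_sin,
    Real.cos_arctan, Real.sin_arctan]
  have hx' : (x:ℝ) ≠ 0 := hx.ne'
  have hsC : ((Real.sqrt (1 + (y/x)^2) : ℝ) : ℂ) ≠ 0 := by exact_mod_cast hs.ne'
  have hxC : ((x:ℝ):ℂ) ≠ 0 := by exact_mod_cast hx'
  have h2 : ((Real.sqrt (x^2 + y^2) : ℝ) : ℂ) ≠ 0 := by
    have : Real.sqrt (x^2+y^2) > 0 := Real.sqrt_pos.2 (by positivity)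
    exact_mod_cast this.ne'
  push_cast
  field_simp
  have hs2 : ((Real.sqrt ((x^2+y^2)/x^2) : ℝ) : ℂ) ≠ 0 := by
    have : Real.sqrt ((x^2+y^2)/x^2) > 0 := Real.sqrt_pos.2 (by positivity)
    exact_mod_cast this.ne'
  rw [mul_div_cancel_right₀ _ hs2]

lemma int_valued_const {h : ℝ → ℝ} (hc : Continuous h)
    (hz : ∀ x, ∃ n : ℤ, h x = n) : ∀ x y, h x = h y := by
  have key : ∀ x y : ℝ, ¬ (h x < h y) := by
    intro x y hlt
    obtain ⟨n, hn⟩ := hz x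
    obtain ⟨k, hk⟩ := hz y
    have hnk : n < k := by rw [hn, hk] at hlt; exact_mod_cast hlt
    have hmem : (n : ℝ) + 1/2 ∈ Set.Icc (h x) (h y) := by
      constructor
      · rw [hn]; linarith
      · rw [hk]
        have : (n:ℝ) + 1 ≤ k := by exact_mod_cast hnk
        linarith
    obtain ⟨z, hzv⟩ := intermediate_value_univ x y hc hmem
    obtain ⟨j, hj⟩ := hz z
    rw [hj] at hzv
    have : (2*j : ℝ) = 2*n + 1 := by linarith [hzv]
    have : 2*j = 2*n + 1 := by exact_mod_cast this
    omega
  intro x y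
  exact le_antisymm (not_lt.1 (key y x)) (not_lt.1 (key x y))

lemma winding_eq (F : ℝ → ℂ) (hF0 : ∀ ω, F ω ≠ 0) (φ ψ : ℝ → ℝ)
    (hφc : Continuous φ) (hψc : Continuous ψ)
    (hFφ : ∀ ω, F ω = (‖F ω‖ : ℂ) * Complex.exp (2 * Real.pi * Complex.I * (φ ω)))
    (hFψ : ∀ ω, F ω = (‖F ω‖ : ℂ) * Complex.exp (2 * Real.pi * Complex.I * (ψ ω)))
    {a b a' b' : ℝ} (ha : Tendsto φ atBot (nhds a)) (hb : Tendsto φ atTop (nhds b))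
    (ha' : Tendsto ψ atBot (nhds a')) (hb' : Tendsto ψ atTop (nhds b')) :
    b - a = b' - a' := by
  have hzint : ∀ ω, ∃ n : ℤ, φ ω - ψ ω = n := by
    intro ω
    have habs : (‖F ω‖ : ℂ) ≠ 0 := by
      simpa using hF0 ω
    have hexp : Complex.exp (2 * Real.pi * Complex.I * (φ ω)) =
        Complex.exp (2 * Real.pi * Complex.I * (ψ ω)) := by
      have := (hFφ ω).symm.trans (hFψ ω)
      exact mul_left_cancel₀ habs this
    rw [Complex.exp_eq_exp_iff_exists_int] at hexp
    obtain ⟨n, hn⟩ := hexp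
    refine ⟨n, ?_⟩
    have hπ : (Real.pi : ℂ) ≠ 0 := by exact_mod_cast Real.pi_ne_zero
    have : ((φ ω : ℂ) - ψ ω) * (2 * Real.pi * Complex.I) = n * (2 * Real.pi * Complex.I) := by
      linear_combination hn
    have h2 : ((φ ω : ℂ) - ψ ω) = n := by
      have hne : (2 * (Real.pi:ℂ) * Complex.I) ≠ 0 := by
        simp [Complex.I_ne_zero, hπ]
      exact mul_right_cancel₀ hne this
    exact_mod_cast h2
  have hconst := int_valued_const (hφc.sub hψc) hzint
  have h1 : Tendsto (fun ω => φ ω - ψ ω) atBot (nhds (a - a')) := ha.sub ha'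
  have h2 : Tendsto (fun ω => φ ω - ψ ω) atTop (nhds (b - b')) := hb.sub hb'
  have h3 : Tendsto (fun ω => φ ω - ψ ω) atBot (nhds (φ 0 - ψ 0)) := by
    have : (fun ω => φ ω - ψ ω) = fun _ => φ 0 - ψ 0 := funext fun ω => hconst ω 0
    rw [this]; exact tendsto_const_nhds
  have h4 : Tendsto (fun ω => φ ω - ψ ω) atTop (nhds (φ 0 - ψ 0)) := by
    have : (fun ω => φ ω - ψ ω) = fun _ => φ 0 - ψ 0 := funext fun ω => hconst ω 0
    rw [this]; exact tendsto_const_nhds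
  have e1 : a - a' = φ 0 - ψ 0 := tendsto_nhds_unique h1 h3
  have e2 : b - b' = φ 0 - ψ 0 := tendsto_nhds_unique h2 h4
  linarith

lemma det_formula {m : ℕ} (C : Matrix (Fin m) (Fin m) ℂ) (hC : IsUnit C.det)
    (d κ : Fin m → ℂ) (u : ℂ) :
    (C + u • vecMulVec d κ).det = C.det * (1 + u * (κ ⬝ᵥ (C⁻¹).mulVec d)) := by
  have h1 : u • vecMulVec d κ = replicateCol Unit (u • d) * replicateRow Unit κ := by
    ext i j
    simp [vecMulVec, Matrix.mul_apply, replicateCol, replicateRow]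
    ring
  rw [h1, det_add_replicateCol_mul_replicateRow hC]
  congr 1
  rw [det_unique]
  rw [Matrix.mul_assoc]
  simp only [Matrix.add_apply, Matrix.one_apply_eq, Matrix.mul_apply, replicateCol, replicateRow,
    Matrix.mulVec, dotProduct, of_apply, Pi.add_apply, Pi.smul_apply, smul_eq_mul]
  rw [Finset.mul_sum]
  congr 1
  apply Finset.sum_congr rfl
  intro x _
  rw [Finset.mul_sum, Finset.mul_sum, Finset.mul_sum]
  apply Finset.sum_congr rfl
  intro j _
  ring

-- linear tendsto helpers
lemma lin_a (c e : ℝ) (he : 0 < e) : Tendsto (fun ω : ℝ => (ω + c)/e) atTop atTop :=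
  (tendsto_atTop_add_const_right _ c tendsto_id).atTop_div_const he

lemma lin_b (c e : ℝ) (he : 0 < e) : Tendsto (fun ω : ℝ => (ω + c)/e) atBot atBot :=
  (tendsto_atBot_add_const_right _ c tendsto_id).atBot_div_const he

lemma lin_d (c e : ℝ) (he : 0 < e) : Tendsto (fun ω : ℝ => (c - ω)/e) atBot atTop := by
  have h : Tendsto (fun ω : ℝ => -ω + c) atBot atTop :=
    tendsto_atTop_add_const_right _ c tendsto_neg_atBot_atTop
  have h2 := h.atTop_div_const he
  convert h2 using 2 with ω
  ring

lemma lin_c (c e : ℝ) (he : 0 < e) : Tendsto (fun ω : ℝ => (c - ω)/e) atTop atBot := by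
  have h : Tendsto (fun ω : ℝ => -ω + c) atTop atBot :=
    tendsto_atBot_add_const_right _ c tendsto_neg_atTop_atBot
  have h2 := h.atBot_div_const he
  convert h2 using 2 with ω
  ring

lemma arctan_top {f : ℝ → ℝ} {l : Filter ℝ} (hf : Tendsto f l atTop) :
    Tendsto (fun x => Real.arctan (f x)) l (nhds (Real.pi/2)) :=
  (Real.tendsto_arctan_atTop.mono_right nhdsWithin_le_nhds).comp hf

lemma arctan_bot {f : ℝ → ℝ} {l : Filter ℝ} (hf : Tendsto f l atBot) :
    Tendsto (fun x => Real.arctan (f x)) l (nhds (-(Real.pi/2))) :=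
  (Real.tendsto_arctan_atBot.mono_right nhdsWithin_le_nhds).comp hf

lemma ne_zero_of_re_ne (x y : ℝ) (hx : x ≠ 0) : ((x:ℂ) + y*Complex.I) ≠ 0 := by
  intro h
  apply hx
  have := congrArg Complex.re h
  simpa using this
lemma winding_from_arg (F : ℝ → ℂ) (hF0 : ∀ ω, F ω ≠ 0) (θ : ℝ → ℝ) (hθc : Continuous θ)
    (hFθ : ∀ ω, F ω = (‖F ω‖ : ℂ) * Complex.exp ((θ ω : ℂ) * Complex.I))
    {θa θb : ℝ} (hθa : Tendsto θ atBot (nhds θa)) (hθb : Tendsto θ atTop (nhds θb))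
    (φ : ℝ → ℝ) (hφc : Continuous φ)
    (hφ : ∀ ω, F ω = (‖F ω‖:ℂ) * Complex.exp (2*Real.pi*Complex.I*(φ ω)))
    (a b : ℝ) (ha : Tendsto φ atBot (nhds a)) (hb : Tendsto φ atTop (nhds b)) :
    b - a = (θb - θa) / (2*Real.pi) := by
  set ψ : ℝ → ℝ := fun ω => θ ω / (2*Real.pi) with hψ
  have hψc : Continuous ψ := hθc.div_const _
  have hFψ : ∀ ω, F ω = (‖F ω‖ : ℂ) * Complex.exp (2 * Real.pi * Complex.I * (ψ ω)) := by
    intro ω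
    have hexp : Complex.exp (2 * Real.pi * Complex.I * ((ψ ω : ℝ) : ℂ)) =
        Complex.exp ((θ ω : ℂ) * Complex.I) := by
      congr 1
      show 2 * (Real.pi:ℂ) * Complex.I * ((θ ω / (2*Real.pi) : ℝ) : ℂ) = (θ ω : ℂ) * Complex.I
      have hπ : (Real.pi : ℂ) ≠ 0 := by exact_mod_cast Real.pi_ne_zero
      push_cast
      field_simp
    rw [hexp]
    exact hFθ ω
  have := winding_eq F hF0 φ ψ hφc hψc hφ hFψ ha hb (hθa.div_const _) (hθb.div_const _)
  rw [this]
  ring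
set_option maxHeartbeats 1000000 in
lemma hF_polar (cd : ℂ) (x1 y1 x2 y2 t : ℝ) (hx1 : 0 < x1) (hx2 : 0 < x2) (σ : ℂ)
    (hσ : Complex.exp ((t:ℂ) * Complex.I) = σ) (hσa : ‖σ‖ = 1) :
    cd * (σ * ((x1:ℂ) + y1*Complex.I) / ((x2:ℂ) + y2*Complex.I)) =
    (‖cd * (σ * ((x1:ℂ) + y1*Complex.I) / ((x2:ℂ) + y2*Complex.I))‖ : ℂ) *
      Complex.exp (((Complex.arg cd + t + Real.arctan (y1/x1) - Real.arctan (y2/x2) : ℝ) : ℂ)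
        * Complex.I) := by
  have h2 : ((x2:ℂ)+y2*Complex.I) ≠ 0 := ne_zero_of_re_ne _ _ hx2.ne'
  have h2a : (‖(x2:ℂ)+y2*Complex.I‖ : ℂ) ≠ 0 := by
    simpa using h2
  have habs : ‖cd * (σ * ((x1:ℂ) + y1*Complex.I) / ((x2:ℂ) + y2*Complex.I))‖
      = ‖cd‖ * ‖(x1:ℂ)+y1*Complex.I‖ / ‖(x2:ℂ)+y2*Complex.I‖ := by
    simp [norm_mul, norm_div, hσa, mul_div_assoc]
  rw [habs]
  have hexp : Complex.exp (((Complex.arg cd + t + Real.arctan (y1/x1) - Real.arctan (y2/x2) : ℝ) : ℂ) * Complex.I)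
      = Complex.exp ((Complex.arg cd : ℂ) * Complex.I) * (Complex.exp ((t:ℂ)*Complex.I) *
        Complex.exp ((Real.arctan (y1/x1) : ℂ)*Complex.I)) / Complex.exp ((Real.arctan (y2/x2):ℂ)*Complex.I) := by
    rw [← Complex.exp_add, ← Complex.exp_add, ← Complex.exp_sub]
    congr 1
    push_cast
    ring
  rw [hexp, hσ]
  set E0 := Complex.exp ((Complex.arg cd : ℂ) * Complex.I) with hE0
  set E1 := Complex.exp ((Real.arctan (y1/x1) : ℂ) * Complex.I) with hE1
  set E2 := Complex.exp ((Real.arctan (y2/x2) : ℂ) * Complex.I) with hE2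
  have hcd : cd = (‖cd‖ : ℂ) * E0 := (Complex.norm_mul_exp_arg_mul_I cd).symm
  have hu1 : ((x1:ℂ) + y1*Complex.I) = (‖(x1:ℂ)+y1*Complex.I‖ : ℂ) * E1 :=
    polar_of_pos x1 y1 hx1
  have hu2 : ((x2:ℂ) + y2*Complex.I) = (‖(x2:ℂ)+y2*Complex.I‖ : ℂ) * E2 :=
    polar_of_pos x2 y2 hx2
  have hE2n : E2 ≠ 0 := Complex.exp_ne_zero _
  have hcast : ((‖cd‖ * ‖(x1:ℂ)+y1*Complex.I‖ /
      ‖(x2:ℂ)+y2*Complex.I‖ : ℝ) : ℂ) =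
      (‖cd‖ : ℂ) * (‖(x1:ℂ)+y1*Complex.I‖ : ℂ) /
      (‖(x2:ℂ)+y2*Complex.I‖ : ℂ) := by push_cast; ring
  rw [hcast, hcd, hu1, hu2]
  field_simp [hE2n]
  simp only [hE0, hE1, hE2, norm_mul, Complex.norm_real, norm_norm, Complex.norm_exp_ofReal_mul_I, Complex.ofReal_one, mul_one, one_mul]
  ring_nf



/-- for the single-resonance scattering submatrix
`S(ω) = C + d κᵀ / (−i(ω − ω₀) + γ)` with `C` invertible and
`ρ = −κᵀ C⁻¹ d/(2γ)`:
* if `Re ρ > 1/2`, then `det S(ω) ≠ 0` for all real `ω`, and the winding of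
  `det S(ω)` about the origin as `ω` runs over `(−∞, ∞)` equals `1`;
* if `Re ρ < 1/2`, then `det S(ω) ≠ 0` for all real `ω` and the winding equals `0`.
The winding is expressed via any continuous argument function
`φ : ℝ → ℝ` with `det S(ω) = |det S(ω)| e^{2πi φ(ω)}` having limits `a` at `−∞`
and `b` at `+∞` (the endpoints of the compactified curve both tend to `det C`);
the winding number is `b − a`. -/
theorem winding_single_resonance {m : ℕ} (C : Matrix (Fin m) (Fin m) ℂ)
    (hC : IsUnit C.det) (d κ : Fin m → ℂ) (ω₀ γ : ℝ) (hγ : 0 < γ)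
    (S : ℝ → Matrix (Fin m) (Fin m) ℂ)
    (hS : ∀ ω : ℝ, S ω = C + (-Complex.I * ((ω : ℂ) - ω₀) + γ)⁻¹ • vecMulVec d κ)
    (ρ : ℂ) (hρ : ρ = -(κ ⬝ᵥ (C⁻¹).mulVec d) / (2 * γ)) :
    (1 / 2 < ρ.re →
      (∀ ω : ℝ, (S ω).det ≠ 0) ∧
      (∀ φ : ℝ → ℝ, Continuous φ →
        (∀ ω : ℝ, (S ω).det = ((‖(S ω).det‖ : ℝ) : ℂ) *
          Complex.exp (2 * Real.pi * Complex.I * (φ ω))) →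
        ∀ a b : ℝ, Tendsto φ atBot (nhds a) → Tendsto φ atTop (nhds b) →
          b - a = 1)) ∧
    (ρ.re < 1 / 2 →
      (∀ ω : ℝ, (S ω).det ≠ 0) ∧
      (∀ φ : ℝ → ℝ, Continuous φ →
        (∀ ω : ℝ, (S ω).det = ((‖(S ω).det‖ : ℝ) : ℂ) *
          Complex.exp (2 * Real.pi * Complex.I * (φ ω))) →
        ∀ a b : ℝ, Tendsto φ atBot (nhds a) → Tendsto φ atTop (nhds b) →
          b - a = 0)) := by
  have hγ' : (γ:ℂ) ≠ 0 := by exact_mod_cast hγ.ne'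
  have hdetC : C.det ≠ 0 := hC.ne_zero
  set p := ρ.re with hp
  set q := ρ.im with hq
  have hρ' : ρ = (p:ℂ) + (q:ℂ)*Complex.I := (Complex.re_add_im ρ).symm
  have hsval : κ ⬝ᵥ (C⁻¹).mulVec d = -(2*(γ:ℂ))*ρ := by
    rw [hρ]; field_simp
  have hFeq : ∀ ω : ℝ, (S ω).det = C.det *
      ((((γ:ℝ):ℂ) + ((ω₀ - ω:ℝ):ℂ)*Complex.I - 2*γ*ρ) /
        (((γ:ℝ):ℂ) + ((ω₀ - ω:ℝ):ℂ)*Complex.I)) := by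
    intro ω
    have hz0 : (((γ:ℝ):ℂ) + ((ω₀ - ω:ℝ):ℂ)*Complex.I) ≠ 0 := ne_zero_of_re_ne γ _ hγ.ne'
    rw [hS ω, det_formula C hC d κ _, hsval]
    have hzz : (-Complex.I * ((ω : ℂ) - ω₀) + γ) = ((γ:ℝ):ℂ) + ((ω₀ - ω:ℝ):ℂ)*Complex.I := by
      push_cast; ring
    rw [hzz]
    set w : ℂ := ((γ:ℝ):ℂ) + ((ω₀ - ω:ℝ):ℂ)*Complex.I with hwdef
    congr 1
    field_simp
    ring
  constructor
  · -- case Re ρ > 1/2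
    intro h
    have h' : 1/2 < p := h
    set x := γ*(2*p-1) with hx'
    have hx : 0 < x := mul_pos hγ (by linarith)
    set y : ℝ → ℝ := fun ω => ω - ω₀ + 2*γ*q with hy
    have hFA : ∀ ω : ℝ, (S ω).det = C.det * (((-1 : ℂ)) * (((x:ℝ):ℂ) + ((y ω:ℝ):ℂ)*Complex.I) /
        (((γ:ℝ):ℂ) + ((ω₀ - ω:ℝ):ℂ)*Complex.I)) := by
      intro ω
      rw [hFeq ω]
      have hw2 : (((γ:ℝ):ℂ) + ((ω₀ - ω:ℝ):ℂ)*Complex.I - 2*γ*ρ) =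
          (-1 : ℂ) * (((x:ℝ):ℂ) + ((y ω:ℝ):ℂ)*Complex.I) := by
        rw [hρ', hx']
        simp only [hy]
        push_cast
        ring
      rw [hw2]
    have hF0 : ∀ ω : ℝ, (S ω).det ≠ 0 := by
      intro ω
      rw [hFA ω]
      exact mul_ne_zero hdetC (div_ne_zero
        (mul_ne_zero (by norm_num) (ne_zero_of_re_ne x _ hx.ne'))
        (ne_zero_of_re_ne γ _ hγ.ne'))
    refine ⟨hF0, ?_⟩
    intro φ hφc hφeq a b ha hb
    set θ : ℝ → ℝ := fun ω => Complex.arg C.det + Real.pi + Real.arctan (y ω / x)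
        - Real.arctan ((ω₀ - ω)/γ) with hθ
    have hθc : Continuous θ := by
      apply Continuous.sub
      · exact continuous_const.add (Real.continuous_arctan.comp (by fun_prop))
      · exact Real.continuous_arctan.comp (by fun_prop)
    have hFθ : ∀ ω : ℝ, (S ω).det = ((‖(S ω).det‖ : ℝ) : ℂ) *
        Complex.exp (((θ ω : ℝ) : ℂ) * Complex.I) := by
      intro ω
      rw [hFA ω]
      exact hF_polar C.det x (y ω) γ (ω₀ - ω) Real.pi hx hγ (-1)
        Complex.exp_pi_mul_I (by simp)
    have hyx_bot : Tendsto (fun ω : ℝ => y ω / x) atBot atBot := by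
      have he : (fun ω : ℝ => y ω / x) = fun ω : ℝ => (ω + (2*γ*q - ω₀))/x := by
        funext ω; simp only [hy]; ring
      rw [he]; exact lin_b _ _ hx
    have hyx_top : Tendsto (fun ω : ℝ => y ω / x) atTop atTop := by
      have he : (fun ω : ℝ => y ω / x) = fun ω : ℝ => (ω + (2*γ*q - ω₀))/x := by
        funext ω; simp only [hy]; ring
      rw [he]; exact lin_a _ _ hx
    have hθ_bot : Tendsto θ atBot
        (nhds (Complex.arg C.det + Real.pi + (-(Real.pi/2)) - Real.pi/2)) :=
      (tendsto_const_nhds.add (arctan_bot hyx_bot)).sub (arctan_top (lin_d ω₀ γ hγ))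
    have hθ_top : Tendsto θ atTop
        (nhds (Complex.arg C.det + Real.pi + Real.pi/2 - (-(Real.pi/2)))) :=
      (tendsto_const_nhds.add (arctan_top hyx_top)).sub (arctan_bot (lin_c ω₀ γ hγ))
    have hw := winding_from_arg (fun ω => (S ω).det) hF0 θ hθc hFθ hθ_bot hθ_top
      φ hφc hφeq a b ha hb
    rw [hw]
    have h2π : (2*Real.pi) ≠ 0 := by positivity
    rw [div_eq_one_iff_eq h2π]
    ring
  · -- case Re ρ < 1/2
    intro h
    have h' : p < 1/2 := h
    set x := γ*(1-2*p) with hx'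
    have hx : 0 < x := mul_pos hγ (by linarith)
    set y : ℝ → ℝ := fun ω => ω₀ - ω - 2*γ*q with hy
    have hFA : ∀ ω : ℝ, (S ω).det = C.det * (((1 : ℂ)) * (((x:ℝ):ℂ) + ((y ω:ℝ):ℂ)*Complex.I) /
        (((γ:ℝ):ℂ) + ((ω₀ - ω:ℝ):ℂ)*Complex.I)) := by
      intro ω
      rw [hFeq ω]
      have hw2 : (((γ:ℝ):ℂ) + ((ω₀ - ω:ℝ):ℂ)*Complex.I - 2*γ*ρ) =
          (1 : ℂ) * (((x:ℝ):ℂ) + ((y ω:ℝ):ℂ)*Complex.I) := by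
        rw [hρ', hx']
        simp only [hy]
        push_cast
        ring
      rw [hw2]
    have hF0 : ∀ ω : ℝ, (S ω).det ≠ 0 := by
      intro ω
      rw [hFA ω]
      exact mul_ne_zero hdetC (div_ne_zero
        (mul_ne_zero one_ne_zero (ne_zero_of_re_ne x _ hx.ne'))
        (ne_zero_of_re_ne γ _ hγ.ne'))
    refine ⟨hF0, ?_⟩
    intro φ hφc hφeq a b ha hb
    set θ : ℝ → ℝ := fun ω => Complex.arg C.det + 0 + Real.arctan (y ω / x)
        - Real.arctan ((ω₀ - ω)/γ) with hθ
    have hθc : Continuous θ := by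
      apply Continuous.sub
      · exact continuous_const.add (Real.continuous_arctan.comp (by fun_prop))
      · exact Real.continuous_arctan.comp (by fun_prop)
    have hFθ : ∀ ω : ℝ, (S ω).det = ((‖(S ω).det‖ : ℝ) : ℂ) *
        Complex.exp (((θ ω : ℝ) : ℂ) * Complex.I) := by
      intro ω
      rw [hFA ω]
      exact hF_polar C.det x (y ω) γ (ω₀ - ω) 0 hx hγ 1 (by simp) (by simp)
    have hyx_bot : Tendsto (fun ω : ℝ => y ω / x) atBot atTop := by
      have he : (fun ω : ℝ => y ω / x) = fun ω : ℝ => ((ω₀ - 2*γ*q) - ω)/x := by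
        funext ω; simp only [hy]; ring
      rw [he]; exact lin_d _ _ hx
    have hyx_top : Tendsto (fun ω : ℝ => y ω / x) atTop atBot := by
      have he : (fun ω : ℝ => y ω / x) = fun ω : ℝ => ((ω₀ - 2*γ*q) - ω)/x := by
        funext ω; simp only [hy]; ring
      rw [he]; exact lin_c _ _ hx
    have hθ_bot : Tendsto θ atBot
        (nhds (Complex.arg C.det + 0 + Real.pi/2 - Real.pi/2)) :=
      (tendsto_const_nhds.add (arctan_top hyx_bot)).sub (arctan_top (lin_d ω₀ γ hγ))
    have hθ_top : Tendsto θ atTop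
        (nhds (Complex.arg C.det + 0 + (-(Real.pi/2)) - (-(Real.pi/2)))) :=
      (tendsto_const_nhds.add (arctan_bot hyx_top)).sub (arctan_bot (lin_c ω₀ γ hγ))
    have hw := winding_from_arg (fun ω => (S ω).det) hF0 θ hθc hFθ hθ_bot hθ_top
      φ hφc hφeq a b ha hb
    rw [hw]
    rw [div_eq_zero_iff]
    left
    ring
end
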